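/- arXiv:2302.06271 — 3 statements merged into one kernel-verified Lean document; each statement's English description precedes it below -/
import Mathlib

section
/- Let (Ω, 𝓕) be a measurable space, μ a σ-finite measure on Ω, and let P and Q be probability measures on Ω with densities p = dP/dμ and q = dQ/dμ. Fix α ∈ (0,1), let M = (1−α)·P + α·Q (with density m = (1−α)p + αq with respect to μ), and let D* = (1−α)p/m on {m > 0}. Then ∫ ((1−α) p log D* + α q log(1−D*)) dμ = (1−α)log(1−α) + α log α + (1−α)·KL(P‖M) + α·KL(Q‖M), where KL(P‖M) = ∫ p log(p/m) dμ is the Kullback–Leibler divergence. -/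
open Real MeasureTheory


lemma term_eq (c a mx : ℝ) (hc : 0 < c) (ha : 0 ≤ a) (hmx : 0 < mx) :
    c * a * log (c * a / mx) = c * log c * a + c * (a * log (a / mx)) := by
  rcases ha.eq_or_lt with h | h
  · simp [← h]
  · have h1 : log (c * a / mx) = log c + log a - log mx := by
      rw [log_div (by positivity) hmx.ne', log_mul hc.ne' h.ne']
    have h2 : log (a / mx) = log a - log mx := log_div h.ne' hmx.ne'
    rw [h1, h2]; ring

lemma kl_bound {a mx c : ℝ} (ha : 0 ≤ a) (hc : 0 < c) (h1 : c * a ≤ mx) :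
    |a * log (a / mx)| ≤ |log c| * a + mx := by
  rcases ha.eq_or_lt with h | h
  · have : 0 ≤ mx := le_trans (by rw [← h]; ring_nf; positivity) h1
    simp [← h]; positivity
  · have hm : 0 < mx := lt_of_lt_of_le (by positivity) h1
    rw [abs_le]
    constructor
    · have hlog : log (mx / a) ≤ mx / a - 1 := Real.log_le_sub_one_of_pos (by positivity)
      have : a - mx ≤ a * log (a / mx) := by
        have : a * log (mx / a) ≤ a * (mx / a - 1) := by nlinarith
        rw [log_div hm.ne' h.ne'] at this
        rw [log_div h.ne' hm.ne']
        have hma : a * (mx / a - 1) = mx - a := by field_simp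
        nlinarith
      nlinarith [abs_nonneg (log c), mul_nonneg (abs_nonneg (log c)) ha]
    · have hda : a / mx ≤ 1 / c := by
        rw [div_le_div_iff₀ hm hc]; nlinarith
      have : log (a / mx) ≤ log (1 / c) := Real.log_le_log (by positivity) hda
      have h2 : log (1 / c) = -log c := by simp
      have : a * log (a / mx) ≤ a * |log c| := by
        have := neg_abs_le (log c)
        nlinarith
      nlinarith

/-- Theorem 2, part 2: with `m = (1-α)p + αq` the density of the mixture
`M = (1-α)·P + α·Q` and `D* = (1-α)p/m` on `{m > 0}`, the adversarial objective at the
optimal discriminator equals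
`(1-α)log(1-α) + α log α + (1-α)·KL(P‖M) + α·KL(Q‖M)`,
where `KL(P‖M) = ∫ p log(p/m) dμ`. -/
theorem stmt2 {Ω : Type*} [MeasurableSpace Ω] (μ : Measure Ω) [SigmaFinite μ]
    (P Q : Measure Ω) [IsProbabilityMeasure P] [IsProbabilityMeasure Q]
    (p q : Ω → ℝ) (hp : Measurable p) (hq : Measurable q)
    (hp0 : ∀ x, 0 ≤ p x) (hq0 : ∀ x, 0 ≤ q x)
    (hP : P = μ.withDensity (fun x => ENNReal.ofReal (p x)))
    (hQ : Q = μ.withDensity (fun x => ENNReal.ofReal (q x)))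
    (α : ℝ) (hα : α ∈ Set.Ioo (0 : ℝ) 1)
    (M : Measure Ω) (hM : M = ENNReal.ofReal (1 - α) • P + ENNReal.ofReal α • Q)
    (m : Ω → ℝ) (hm : ∀ x, m x = (1 - α) * p x + α * q x)
    (Dstar : Ω → ℝ)
    (hDstar : ∀ x, Dstar x = if 0 < m x then (1 - α) * p x / m x else 1 / 2) :
    ∫ x, ((1 - α) * p x * log (Dstar x) + α * q x * log (1 - Dstar x)) ∂μ =
      (1 - α) * log (1 - α) + α * log α
        + (1 - α) * ∫ x, p x * log (p x / m x) ∂μ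
        + α * ∫ x, q x * log (q x / m x) ∂μ := by
  obtain ⟨hα0, hα1⟩ := hα
  have hα1' : 0 < 1 - α := by linarith
  -- m nonneg, measurable
  have hmfun : m = fun x => (1 - α) * p x + α * q x := funext hm
  have hm_meas : Measurable m := by rw [hmfun]; fun_prop
  have hm0 : ∀ x, 0 ≤ m x := fun x => by
    rw [hm x]
    exact add_nonneg (mul_nonneg hα1'.le (hp0 x)) (mul_nonneg hα0.le (hq0 x))
  -- integrability of p, q
  have lint_p : ∫⁻ x, ENNReal.ofReal (p x) ∂μ = 1 := by
    have := measure_univ (μ := P)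
    rw [hP, withDensity_apply _ MeasurableSet.univ] at this
    simpa using this
  have lint_q : ∫⁻ x, ENNReal.ofReal (q x) ∂μ = 1 := by
    have := measure_univ (μ := Q)
    rw [hQ, withDensity_apply _ MeasurableSet.univ] at this
    simpa using this
  have hpint : Integrable p μ := by
    refine ⟨hp.aestronglyMeasurable, ?_⟩
    rw [hasFiniteIntegral_iff_ofReal (Filter.Eventually.of_forall hp0), lint_p]
    exact ENNReal.one_lt_top
  have hqint : Integrable q μ := by
    refine ⟨hq.aestronglyMeasurable, ?_⟩
    rw [hasFiniteIntegral_iff_ofReal (Filter.Eventually.of_forall hq0), lint_q]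
    exact ENNReal.one_lt_top
  have hmint : Integrable m μ := by
    rw [hmfun]; exact (hpint.const_mul _).add (hqint.const_mul _)
  have int_p : ∫ x, p x ∂μ = 1 := by
    rw [integral_eq_lintegral_of_nonneg_ae (Filter.Eventually.of_forall hp0)
      hp.aestronglyMeasurable, lint_p]; simp
  have int_q : ∫ x, q x ∂μ = 1 := by
    rw [integral_eq_lintegral_of_nonneg_ae (Filter.Eventually.of_forall hq0)
      hq.aestronglyMeasurable, lint_q]; simp
  -- integrability of KL integrands
  have hg1_meas : Measurable (fun x => p x * log (p x / m x)) :=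
    hp.mul (Real.measurable_log.comp (hp.div hm_meas))
  have hg2_meas : Measurable (fun x => q x * log (q x / m x)) :=
    hq.mul (Real.measurable_log.comp (hq.div hm_meas))
  have hg1int : Integrable (fun x => p x * log (p x / m x)) μ := by
    refine Integrable.mono' ((hpint.const_mul |log (1 - α)|).add hmint)
      hg1_meas.aestronglyMeasurable (Filter.Eventually.of_forall fun x => ?_)
    rw [Real.norm_eq_abs]
    exact kl_bound (hp0 x) hα1' (by rw [hm x]; nlinarith [hq0 x])
  have hg2int : Integrable (fun x => q x * log (q x / m x)) μ := by
    refine Integrable.mono' ((hqint.const_mul |log α|).add hmint)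
      hg2_meas.aestronglyMeasurable (Filter.Eventually.of_forall fun x => ?_)
    rw [Real.norm_eq_abs]
    exact kl_bound (hq0 x) hα0 (by rw [hm x]; nlinarith [hp0 x])
  -- pointwise identity
  have hpt : ∀ x, (1 - α) * p x * log (Dstar x) + α * q x * log (1 - Dstar x) =
      (1 - α) * log (1 - α) * p x + α * log α * q x
        + (1 - α) * (p x * log (p x / m x)) + α * (q x * log (q x / m x)) := by
    intro x
    by_cases hmx : 0 < m x
    · have hD : Dstar x = (1 - α) * p x / m x := by rw [hDstar x, if_pos hmx]
      have hD2 : 1 - Dstar x = α * q x / m x := by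
        rw [hD]
        field_simp
        rw [hm x]; ring
      rw [hD2, hD, term_eq (1 - α) (p x) (m x) hα1' (hp0 x) hmx,
        term_eq α (q x) (m x) hα0 (hq0 x) hmx]
      ring
    · have hmx0 : m x = 0 := le_antisymm (not_lt.mp hmx) (hm0 x)
      have hpx : p x = 0 := by
        have := hm x; nlinarith [hp0 x, hq0 x]
      have hqx : q x = 0 := by
        have := hm x; nlinarith [hp0 x, hq0 x]
      simp [hpx, hqx]
  -- rewrite the integral
  rw [integral_congr_ae (Filter.Eventually.of_forall hpt)]
  have i1 : Integrable (fun x => (1 - α) * log (1 - α) * p x) μ := hpint.const_mul _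
  have i2 : Integrable (fun x => α * log α * q x) μ := hqint.const_mul _
  have i3 : Integrable (fun x => (1 - α) * (p x * log (p x / m x))) μ := hg1int.const_mul _
  have i4 : Integrable (fun x => α * (q x * log (q x / m x))) μ := hg2int.const_mul _
  have i12 : Integrable (fun x => (1 - α) * log (1 - α) * p x + α * log α * q x) μ := i1.add i2
  have i123 : Integrable (fun x => (1 - α) * log (1 - α) * p x + α * log α * q x
      + (1 - α) * (p x * log (p x / m x))) μ := i12.add i3
  rw [integral_add i123 i4, integral_add i12 i3,
    integral_add i1 i2,
    integral_const_mul, integral_const_mul, integral_const_mul, integral_const_mul,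
    int_p, int_q]
  ring
end

section
/- Let (Ω, 𝓕) be a measurable space, μ a σ-finite measure on Ω, α ∈ (0,1), and let P be a fixed probability measure on Ω with density with respect to μ. For each probability measure Q with density with respect to μ, define V(Q) = (1−α)log(1−α) + α log α + (1−α)·KL(P‖M_Q) + α·KL(Q‖M_Q), where M_Q = (1−α)·P + α·Q. Then for every such Q, V(Q) ≥ (1−α)log(1−α) + α log α, and the minimum value (1−α)log(1−α) + α log α is attained if and only if Q = P. -/
/-!
Writing `m = (1-α)p + αq` for the mixture density, the linear terms `(1-α)(p - m) + α(q - m)`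
vanish, so the integrand of `(1-α)·KL(P‖M) + α·KL(Q‖M)` equals
`m·((1-α)·klFun(p/m) + α·klFun(q/m))` with `klFun x = x log x + 1 - x ≥ 0`, which vanishes only
at `x = 1`. Hence the integral is nonnegative, and it is zero iff `p = m = q` almost everywhere,
i.e. iff `Q = P`.
-/

open Real MeasureTheory InformationTheory Filter

lemma mul_log_div_eq_mul_klFun {a b : ℝ} (hb : b ≠ 0) :
    a * log (a / b) = b * klFun (a / b) + (a - b) := by
  rw [klFun_apply]
  field_simp
  ring

lemma sub_le_mul_log_div {a b : ℝ} (ha : 0 ≤ a) (hb : 0 < b) :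
    a - b ≤ a * log (a / b) := by
  rw [mul_log_div_eq_mul_klFun hb.ne']
  nlinarith [klFun_nonneg (div_nonneg ha hb.le)]

lemma abs_mul_log_div_le {a b c : ℝ} (hc : 0 < c) (ha : 0 ≤ a) (hcab : c * a ≤ b) :
    |a * log (a / b)| ≤ |b - a| + |log c| * a := by
  rcases ha.eq_or_lt with rfl | ha
  · simp
  have hb : 0 < b := (mul_pos hc ha).trans_le hcab
  have hlower := sub_le_mul_log_div ha.le hb
  have hupper : a * log (a / b) ≤ -log c * a := by
    have hlog : log (a / b) ≤ -log c := by
      rw [← log_inv]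
      refine log_le_log (by positivity) ?_
      rw [div_le_iff₀ hb, inv_mul_eq_div, le_div_iff₀ hc]
      linarith
    linarith [mul_le_mul_of_nonneg_left hlog ha.le]
  rw [abs_le]
  constructor <;> linarith [le_abs_self (b - a), neg_abs_le (b - a),
    mul_le_mul_of_nonneg_right (neg_le_abs (log c)) ha.le, mul_nonneg (abs_nonneg (log c)) ha.le]

/-- Integrand of `(1-α)·KL(P‖M) + α·KL(Q‖M)` at density values `a`, `b`; where the mixture
`(1-α)a + αb` vanishes, the junk values `x / 0 = 0` and `log 0 = 0` make it `0`. -/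
noncomputable def skewJSIntegrand (α a b : ℝ) : ℝ :=
  (1 - α) * (a * log (a / ((1 - α) * a + α * b)))
    + α * (b * log (b / ((1 - α) * a + α * b)))

lemma skewJSIntegrand_eq_mul_klFun {α a b : ℝ} (hm : (1 - α) * a + α * b ≠ 0) :
    skewJSIntegrand α a b = ((1 - α) * a + α * b) *
      ((1 - α) * klFun (a / ((1 - α) * a + α * b)) + α * klFun (b / ((1 - α) * a + α * b))) := by
  rw [skewJSIntegrand, mul_log_div_eq_mul_klFun hm, mul_log_div_eq_mul_klFun hm]
  ring

lemma skewJSIntegrand_nonneg {α a b : ℝ} (ha : 0 ≤ a) (hb : 0 ≤ b) (hα₀ : 0 ≤ α) (hα₁ : α ≤ 1) :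
    0 ≤ skewJSIntegrand α a b := by
  have hα : 0 ≤ 1 - α := by linarith
  rcases (show 0 ≤ (1 - α) * a + α * b by positivity).eq_or_lt with hm | hm
  · simp [skewJSIntegrand, ← hm]
  rw [skewJSIntegrand_eq_mul_klFun hm.ne']
  have hka := klFun_nonneg (div_nonneg ha hm.le)
  have hkb := klFun_nonneg (div_nonneg hb hm.le)
  positivity

lemma skewJSIntegrand_eq_zero_iff {α a b : ℝ} (ha : 0 ≤ a) (hb : 0 ≤ b) (hα₀ : 0 < α)
    (hα₁ : α < 1) :
    skewJSIntegrand α a b = 0 ↔ a = b := by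
  have hα : 0 < 1 - α := by linarith
  set m := (1 - α) * a + α * b
  rcases (show 0 ≤ m by positivity).eq_or_lt with hm | hm
  · have ha0 : a = 0 := by nlinarith [mul_nonneg hα.le ha, mul_nonneg hα₀.le hb]
    have hb0 : b = 0 := by nlinarith [mul_nonneg hα.le ha, mul_nonneg hα₀.le hb]
    simp [ha0, hb0, skewJSIntegrand]
  have hka := klFun_nonneg (div_nonneg ha hm.le)
  have hkb := klFun_nonneg (div_nonneg hb hm.le)
  rw [skewJSIntegrand_eq_mul_klFun hm.ne', mul_eq_zero, or_iff_right hm.ne',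
    add_eq_zero_iff_of_nonneg (by positivity) (by positivity),
    mul_eq_zero, mul_eq_zero, or_iff_right hα.ne', or_iff_right hα₀.ne',
    klFun_eq_zero_iff (div_nonneg ha hm.le), klFun_eq_zero_iff (div_nonneg hb hm.le),
    div_eq_one_iff_eq hm.ne', div_eq_one_iff_eq hm.ne']
  constructor
  · rintro ⟨ha, hb⟩; rw [ha, hb]
  · rintro rfl; constructor <;> ring

section Integrals

variable {Ω : Type*} [MeasurableSpace Ω] {μ : Measure Ω}

lemma integrable_of_isFiniteMeasure_withDensity_ofReal {f : Ω → ℝ}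
    [IsFiniteMeasure (μ.withDensity fun x => ENNReal.ofReal (f x))]
    (hf : AEStronglyMeasurable f μ) (hf0 : 0 ≤ᵐ[μ] f) : Integrable f μ := by
  refine ⟨hf, (hasFiniteIntegral_iff_ofReal hf0).2 ?_⟩
  rw [← setLIntegral_univ, ← withDensity_apply _ MeasurableSet.univ]
  exact measure_lt_top _ _

lemma withDensity_ofReal_eq_withDensity_ofReal_iff {f g : Ω → ℝ} (hf : Integrable f μ)
    (hg : AEMeasurable g μ) (hf0 : 0 ≤ᵐ[μ] f) (hg0 : 0 ≤ᵐ[μ] g) :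
    μ.withDensity (fun x => ENNReal.ofReal (f x)) = μ.withDensity (fun x => ENNReal.ofReal (g x))
      ↔ f =ᵐ[μ] g := by
  rw [withDensity_eq_iff hf.aemeasurable.ennreal_ofReal hg.ennreal_ofReal hf.lintegral_lt_top.ne]
  refine eventually_congr ?_
  filter_upwards [hf0, hg0] with x hfx hgx
  exact ENNReal.ofReal_eq_ofReal_iff hfx hgx

lemma integrable_mul_log_div {f g : Ω → ℝ} {c : ℝ} (hc : 0 < c) (hf : Integrable f μ)
    (hg : Integrable g μ) (hf0 : 0 ≤ᵐ[μ] f) (hfg : ∀ᵐ x ∂μ, c * f x ≤ g x) :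
    Integrable (fun x => f x * log (f x / g x)) μ := by
  refine ((hg.sub hf).abs.add (hf.const_mul |log c|)).mono' ?_ ?_
  · exact (hf.aemeasurable.mul (hf.aemeasurable.div hg.aemeasurable).log).aestronglyMeasurable
  · filter_upwards [hf0, hfg] with x hfx hfgx
    exact abs_mul_log_div_le hc hfx hfgx

lemma integrable_mul_log_div_mix_left {p q : Ω → ℝ} {s t : ℝ} (hs : 0 < s) (ht : 0 ≤ t)
    (hp : Integrable p μ) (hq : Integrable q μ) (hp0 : 0 ≤ᵐ[μ] p) (hq0 : 0 ≤ᵐ[μ] q) :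
    Integrable (fun x => p x * log (p x / (s * p x + t * q x))) μ :=
  integrable_mul_log_div hs hp ((hp.const_mul s).add (hq.const_mul t)) hp0 <| by
    filter_upwards [hq0] with x hqx
    exact le_add_of_nonneg_right (mul_nonneg ht hqx)

lemma integrable_mul_log_div_mix_right {p q : Ω → ℝ} {s t : ℝ} (hs : 0 ≤ s) (ht : 0 < t)
    (hp : Integrable p μ) (hq : Integrable q μ) (hp0 : 0 ≤ᵐ[μ] p) (hq0 : 0 ≤ᵐ[μ] q) :
    Integrable (fun x => q x * log (q x / (s * p x + t * q x))) μ := by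
  simpa only [add_comm] using integrable_mul_log_div_mix_left ht hs hq hp hq0 hp0

lemma integrable_skewJSIntegrand {α : ℝ} {p q : Ω → ℝ} (hα₀ : 0 < α) (hα₁ : α < 1)
    (hp : Integrable p μ) (hq : Integrable q μ) (hp0 : 0 ≤ᵐ[μ] p) (hq0 : 0 ≤ᵐ[μ] q) :
    Integrable (fun x => skewJSIntegrand α (p x) (q x)) μ :=
  ((integrable_mul_log_div_mix_left (sub_pos.2 hα₁) hα₀.le hp hq hp0 hq0).const_mul _).add
    ((integrable_mul_log_div_mix_right (sub_pos.2 hα₁).le hα₀ hp hq hp0 hq0).const_mul _)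

lemma integral_skewJSIntegrand {α : ℝ} {p q : Ω → ℝ} (hα₀ : 0 < α) (hα₁ : α < 1)
    (hp : Integrable p μ) (hq : Integrable q μ) (hp0 : 0 ≤ᵐ[μ] p) (hq0 : 0 ≤ᵐ[μ] q) :
    ∫ x, skewJSIntegrand α (p x) (q x) ∂μ =
      (1 - α) * ∫ x, p x * log (p x / ((1 - α) * p x + α * q x)) ∂μ
        + α * ∫ x, q x * log (q x / ((1 - α) * p x + α * q x)) ∂μ := by
  rw [← integral_const_mul, ← integral_const_mul, ← integral_add
    ((integrable_mul_log_div_mix_left (sub_pos.2 hα₁) hα₀.le hp hq hp0 hq0).const_mul _)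
    ((integrable_mul_log_div_mix_right (sub_pos.2 hα₁).le hα₀ hp hq hp0 hq0).const_mul _)]
  rfl

lemma integral_skewJSIntegrand_nonneg {α : ℝ} {p q : Ω → ℝ} (hα₀ : 0 ≤ α) (hα₁ : α ≤ 1)
    (hp0 : 0 ≤ᵐ[μ] p) (hq0 : 0 ≤ᵐ[μ] q) : 0 ≤ ∫ x, skewJSIntegrand α (p x) (q x) ∂μ :=
  integral_nonneg_of_ae <| by
    filter_upwards [hp0, hq0] with x hpx hqx
    exact skewJSIntegrand_nonneg hpx hqx hα₀ hα₁

lemma integral_skewJSIntegrand_eq_zero_iff {α : ℝ} {p q : Ω → ℝ} (hα₀ : 0 < α) (hα₁ : α < 1)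
    (hp : Integrable p μ) (hq : Integrable q μ) (hp0 : 0 ≤ᵐ[μ] p) (hq0 : 0 ≤ᵐ[μ] q) :
    ∫ x, skewJSIntegrand α (p x) (q x) ∂μ = 0 ↔ p =ᵐ[μ] q := by
  have hnonneg : 0 ≤ᵐ[μ] fun x => skewJSIntegrand α (p x) (q x) := by
    filter_upwards [hp0, hq0] with x hpx hqx
    exact skewJSIntegrand_nonneg hpx hqx hα₀.le hα₁.le
  rw [integral_eq_zero_iff_of_nonneg_ae hnonneg
    (integrable_skewJSIntegrand hα₀ hα₁ hp hq hp0 hq0)]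
  refine eventually_congr ?_
  filter_upwards [hp0, hq0] with x hpx hqx
  exact skewJSIntegrand_eq_zero_iff hpx hqx hα₀ hα₁

end Integrals

theorem stmt6_general {Ω : Type*} [MeasurableSpace Ω] (μ : Measure Ω)
    (α : ℝ) (hα : α ∈ Set.Ioo (0 : ℝ) 1)
    (P : Measure Ω) [IsProbabilityMeasure P]
    (p : Ω → ℝ) (hp : Measurable p) (hp0 : ∀ x, 0 ≤ p x)
    (hP : P = μ.withDensity (fun x => ENNReal.ofReal (p x)))
    (Q : Measure Ω) [IsProbabilityMeasure Q]
    (q : Ω → ℝ) (hq : Measurable q) (hq0 : ∀ x, 0 ≤ q x)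
    (hQ : Q = μ.withDensity (fun x => ENNReal.ofReal (q x)))
    (m : Ω → ℝ) (hm : ∀ x, m x = (1 - α) * p x + α * q x)
    (V : ℝ)
    (hV : V = (1 - α) * log (1 - α) + α * log α
        + (1 - α) * ∫ x, p x * log (p x / m x) ∂μ
        + α * ∫ x, q x * log (q x / m x) ∂μ) :
    (1 - α) * log (1 - α) + α * log α ≤ V ∧
    (V = (1 - α) * log (1 - α) + α * log α ↔ Q = P) := by
  obtain ⟨hα₀, hα₁⟩ := hα
  have : IsProbabilityMeasure (μ.withDensity fun x => ENNReal.ofReal (p x)) := hP ▸ ‹_›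
  have : IsProbabilityMeasure (μ.withDensity fun x => ENNReal.ofReal (q x)) := hQ ▸ ‹_›
  have hp0' : 0 ≤ᵐ[μ] p := ae_of_all μ hp0
  have hq0' : 0 ≤ᵐ[μ] q := ae_of_all μ hq0
  have hpi := integrable_of_isFiniteMeasure_withDensity_ofReal hp.aestronglyMeasurable hp0'
  have hqi := integrable_of_isFiniteMeasure_withDensity_ofReal hq.aestronglyMeasurable hq0'
  have hJS_nonneg : 0 ≤ ∫ x, skewJSIntegrand α (p x) (q x) ∂μ :=
    integral_skewJSIntegrand_nonneg hα₀.le hα₁.le hp0' hq0'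
  have hJS_eq_zero : ∫ x, skewJSIntegrand α (p x) (q x) ∂μ = 0 ↔ Q = P := by
    rw [integral_skewJSIntegrand_eq_zero_iff hα₀ hα₁ hpi hqi hp0' hq0', hQ, hP,
      withDensity_ofReal_eq_withDensity_ofReal_iff hqi hp.aemeasurable hq0' hp0',
      eventuallyEq_comm]
  simp only [hm] at hV
  rw [hV, add_assoc, ← integral_skewJSIntegrand hα₀ hα₁ hpi hqi hp0' hq0']
  exact ⟨by linarith, by rw [add_eq_left, hJS_eq_zero]⟩

/-- Theorem 2 (global minimum of the UID objective over the agent policy): for a fixed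
probability measure `P` with density `p`, and any probability measure `Q` with density
`q`, setting `M_Q = (1-α)·P + α·Q` (with density `m = (1-α)p + αq`) and
`V(Q) = (1-α)log(1-α) + α log α + (1-α)·KL(P‖M_Q) + α·KL(Q‖M_Q)`
(with `KL(P‖M_Q) = ∫ p log(p/m) dμ`), one has
`V(Q) ≥ (1-α)log(1-α) + α log α`, with equality if and only if `Q = P`. -/
theorem stmt6 {Ω : Type*} [MeasurableSpace Ω] (μ : Measure Ω) [SigmaFinite μ]
    (α : ℝ) (hα : α ∈ Set.Ioo (0 : ℝ) 1)
    (P : Measure Ω) [IsProbabilityMeasure P]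
    (p : Ω → ℝ) (hp : Measurable p) (hp0 : ∀ x, 0 ≤ p x)
    (hP : P = μ.withDensity (fun x => ENNReal.ofReal (p x)))
    (Q : Measure Ω) [IsProbabilityMeasure Q]
    (q : Ω → ℝ) (hq : Measurable q) (hq0 : ∀ x, 0 ≤ q x)
    (hQ : Q = μ.withDensity (fun x => ENNReal.ofReal (q x)))
    (MQ : Measure Ω) (hMQ : MQ = ENNReal.ofReal (1 - α) • P + ENNReal.ofReal α • Q)
    (m : Ω → ℝ) (hm : ∀ x, m x = (1 - α) * p x + α * q x)
    (V : ℝ)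
    (hV : V = (1 - α) * log (1 - α) + α * log α
        + (1 - α) * ∫ x, p x * log (p x / m x) ∂μ
        + α * ∫ x, q x * log (q x / m x) ∂μ) :
    (1 - α) * log (1 - α) + α * log α ≤ V ∧
    (V = (1 - α) * log (1 - α) + α * log α ↔ Q = P) :=
  stmt6_general μ α hα P p hp hp0 hP Q q hq hq0 hQ m hm V hV
end

section
/- For all real numbers a > 0 and b > 0, inf_{z ∈ ℝ} [ a·log(1 + e^{−z}) + b·log(1 + e^{z}) ] = a·log((a+b)/a) + b·log((a+b)/b), and the infimum is attained at z = log(a/b). -/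
open Real

/-- Pointwise computation underlying Theorem 1 for the logistic surrogate loss: for
`a, b > 0`,
`inf_z [ a·log(1 + e^{−z}) + b·log(1 + e^{z}) ] = a·log((a+b)/a) + b·log((a+b)/b)`,
and the infimum is attained at `z = log(a/b)`. -/
theorem stmt12 (a b : ℝ) (ha : 0 < a) (hb : 0 < b) :
    (∀ z : ℝ,
      a * log ((a + b) / a) + b * log ((a + b) / b) ≤
        a * log (1 + exp (-z)) + b * log (1 + exp z)) ∧
    a * log (1 + exp (-(log (a / b)))) + b * log (1 + exp (log (a / b))) =
      a * log ((a + b) / a) + b * log ((a + b) / b) := by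
  constructor
  · intro z
    have hez : 0 < exp z := exp_pos z
    have henz : 0 < exp (-z) := exp_pos _
    have h1 : (0:ℝ) < 1 + exp (-z) := by linarith
    have h2 : (0:ℝ) < 1 + exp z := by linarith
    have hX : 0 < ((a+b)/a) / (1+exp (-z)) := by positivity
    have hY : 0 < ((a+b)/b) / (1+exp z) := by positivity
    have lX := Real.log_le_sub_one_of_pos hX
    have lY := Real.log_le_sub_one_of_pos hY
    have eX : log (((a+b)/a)/(1+exp (-z))) = log ((a+b)/a) - log (1+exp (-z)) :=
      log_div (by positivity) (ne_of_gt h1)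
    have eY : log (((a+b)/b)/(1+exp z)) = log ((a+b)/b) - log (1+exp z) :=
      log_div (by positivity) (ne_of_gt h2)
    have hne : exp (-z) = (exp z)⁻¹ := by rw [exp_neg]
    have sum0 : a * (((a+b)/a)/(1+exp (-z)) - 1) + b * (((a+b)/b)/(1+exp z) - 1) = 0 := by
      rw [hne]
      have h1' : (0:ℝ) < 1 + (exp z)⁻¹ := by positivity
      field_simp
      ring
    have mX := mul_le_mul_of_nonneg_left lX ha.le
    have mY := mul_le_mul_of_nonneg_left lY hb.le
    rw [eX] at mX
    rw [eY] at mY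
    nlinarith [mX, mY, sum0]
  · have hab : (0:ℝ) < a / b := div_pos ha hb
    have e1 : exp (-(log (a/b))) = b/a := by
      rw [exp_neg, exp_log hab]
      field_simp
    have e2 : exp (log (a/b)) = a/b := exp_log hab
    rw [e1, e2]
    have f1 : 1 + b/a = (a+b)/a := by field_simp
    have f2 : 1 + a/b = (a+b)/b := by field_simp; ring
    rw [f1, f2]
end
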